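/- Let N, N', d, k ∈ ℕ with d ≥ 1 and N' ≥ N. Define σ : ℂ^N × ℝ → ℂ^{N'} × ℂ = ℂ^{N'+1} by σ(Z,u) = (Z, 0, u + i(|z_1|² + ⋯ + |z_N|²)), where the middle entry is 0 ∈ ℂ^{N'−N}. Then the real-linear map T from the space of polynomial maps ℂ^{N'+1} → ℝ^d of degree at most k vanishing at 0 to the space of polynomial maps ℝ^{2N+1} ≅ ℂ^N × ℝ → ℝ^d of degree at most k vanishing at 0, defined by letting T(q) be the Taylor polynomial at 0 of degree k of q ∘ σ, is surjective. -/

import Mathlib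

open Complex Topology

noncomputable section

/-- `ℂ^n`. -/
abbrev Cn (n : ℕ) : Type := EuclideanSpace ℂ (Fin n)

/-- The map `σ(Z,u) = (Z, 0, u + i(|z₁|² + ⋯ + |z_N|²)) : ℂ^N × ℝ → ℂ^{N'+1}`. -/
def σmap (N N' : ℕ) : Cn N × ℝ → Cn (N' + 1) := fun Zu =>
  (WithLp.equiv 2 (Fin (N' + 1) → ℂ)).symm fun j =>
    if h : (j : ℕ) < N then Zu.1 ⟨(j : ℕ), h⟩
    else if (j : ℕ) = N' then
      (Zu.2 : ℂ) + Complex.I * ∑ i : Fin N, (Complex.normSq (Zu.1 i) : ℂ)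
    else 0

/-- The real coordinates of `w ∈ ℂ^n`. -/
def coordR {n : ℕ} (w : Cn n) : Fin n × Bool → ℝ :=
  fun x => if x.2 then (w x.1).im else (w x.1).re

/-- Multi-indices `β` with `1 ≤ |β| ≤ k` in the real coordinates of `ℂ^n`; these index the
coefficient space of polynomial maps `ℂ^n → ℝ^d` of degree at most `k` vanishing at `0`. -/
abbrev MIdx (n k : ℕ) : Type :=
  {β : Fin n × Bool → Fin (k + 1) // 1 ≤ ∑ x, (β x : ℕ) ∧ ∑ x, (β x : ℕ) ≤ k}

/-- Evaluation of the polynomial map `ℂ^n → ℝ^d` with coefficient vector `c`. -/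
def evalMPoly {n d k : ℕ} (c : MIdx n k → Fin d → ℝ) (w : Cn n) (i : Fin d) : ℝ :=
  ∑ β : MIdx n k, c β i * ∏ x : Fin n × Bool, (coordR w x) ^ ((β.1 x : ℕ))

/-- Multi-indices `β` with `1 ≤ |β| ≤ k` in the real coordinates of `ℂ^N × ℝ ≅ ℝ^{2N+1}`;
these index the coefficient space of polynomial maps `ℝ^{2N+1} → ℝ^d` of degree at most `k`
vanishing at `0`. -/
abbrev EIdx (N k : ℕ) : Type :=
  {β : (Fin N × Bool) ⊕ Unit → Fin (k + 1) // 1 ≤ ∑ x, (β x : ℕ) ∧ ∑ x, (β x : ℕ) ≤ k}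

/-- The standard real basis vectors of `ℂ^N × ℝ`. -/
def ebasis (N : ℕ) : (Fin N × Bool) ⊕ Unit → Cn N × ℝ := fun x =>
  match x with
  | Sum.inl y => (EuclideanSpace.single y.1 (if y.2 then Complex.I else 1), 0)
  | Sum.inr _ => (0, 1)

/-- The list in which each real direction `x` of `ℂ^N × ℝ` is repeated `β x` times. -/
def emultiList (N : ℕ) (β : (Fin N × Bool) ⊕ Unit → ℕ) : List ((Fin N × Bool) ⊕ Unit) :=
  ((((List.finRange N).flatMap fun i => [Sum.inl (i, false), Sum.inl (i, true)]) ++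
      [Sum.inr ()]).flatMap fun x => List.replicate (β x) x)

/-- The real multi-index partial derivative `D^β f (q)` of `f : ℂ^N × ℝ → ℝ`. -/
def emderiv {N : ℕ} (β : (Fin N × Bool) ⊕ Unit → ℕ) (f : Cn N × ℝ → ℝ) (q : Cn N × ℝ) : ℝ :=
  iteratedFDeriv ℝ (emultiList N β).length f q
    fun j => ebasis N ((emultiList N β).get j)

/-- The map `T` sending (the coefficient vector of) a polynomial map `q : ℂ^{N'+1} → ℝ^d` of
degree at most `k` vanishing at `0` to (the coefficient vector of) the degree-`k` Taylor
polynomial of `q ∘ σ` at `0`. -/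
def Tmap (N N' d k : ℕ) : (MIdx (N' + 1) k → Fin d → ℝ) → (EIdx N k → Fin d → ℝ) :=
  fun c β i => emderiv (fun y => (β.1 y : ℕ)) (fun Zu => evalMPoly c (σmap N N' Zu) i) 0 /
    (∏ y, Nat.factorial (β.1 y : ℕ) : ℝ)

section Aux

open Finset

/-- The derived `BEq` on a sum type is lawful. -/
instance sumLawfulBEq (α β : Type*) [BEq α] [BEq β] [LawfulBEq α] [LawfulBEq β] :
    LawfulBEq (α ⊕ β) where
  eq_of_beq {a b} h := by
    cases a <;> cases b
    · exact congrArg Sum.inl (eq_of_beq h)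
    · exact Bool.noConfusion h
    · exact Bool.noConfusion h
    · exact congrArg Sum.inr (eq_of_beq h)
  rfl {a} := by
    cases a with
    | inl v => exact (BEq.rfl (a := v))
    | inr v => exact (BEq.rfl (a := v))

variable {N : ℕ}

/-- The real-linear coordinate functionals of `ℂ^N × ℝ`. -/
def lcoord (N : ℕ) : (Fin N × Bool) ⊕ Unit → (Cn N × ℝ →L[ℝ] ℝ) := fun x =>
  match x with
  | Sum.inl y =>
      ((if y.2 then Complex.imCLM else Complex.reCLM).comp
        (((EuclideanSpace.proj y.1 : Cn N →L[ℂ] ℂ).restrictScalars ℝ).comp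
          (ContinuousLinearMap.fst ℝ (Cn N) ℝ)))
  | Sum.inr _ => ContinuousLinearMap.snd ℝ (Cn N) ℝ

@[simp] lemma lcoord_inl (y : Fin N × Bool) (v : Cn N × ℝ) :
    lcoord N (Sum.inl y) v = if y.2 then (v.1 y.1).im else (v.1 y.1).re := by
  cases y with
  | mk j b => cases b <;> simp [lcoord]

@[simp] lemma lcoord_inr (u : Unit) (v : Cn N × ℝ) : lcoord N (Sum.inr u) v = v.2 := rfl

lemma lcoord_ebasis (x y : (Fin N × Bool) ⊕ Unit) :
    lcoord N x (ebasis N y) = if x = y then 1 else 0 := by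
  rcases x with ⟨j, b⟩ | ⟨⟩ <;> rcases y with ⟨j', b'⟩ | ⟨⟩
  · rcases eq_or_ne j j' with rfl | hj
    · cases b <;> cases b' <;>
        simp [ebasis, EuclideanSpace.single_apply]
    · cases b <;> cases b' <;>
        simp [ebasis, EuclideanSpace.single_apply, hj, Prod.ext_iff]
  · simp [ebasis]
  · simp [ebasis]
  · simp [ebasis]

/-- The monomial with exponents `β` in the real coordinates of `ℂ^N × ℝ`. -/
def Pmon (N : ℕ) (β : (Fin N × Bool) ⊕ Unit → ℕ) : Cn N × ℝ → ℝ := fun v =>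
  ∏ x, (lcoord N x v) ^ β x

lemma contDiff_Pmon (β : (Fin N × Bool) ⊕ Unit → ℕ) {n : ℕ∞} : ContDiff ℝ n (Pmon N β) :=
  contDiff_prod fun x _ => ((lcoord N x).contDiff).pow _

lemma hasFDerivAt_Pmon (β : (Fin N × Bool) ⊕ Unit → ℕ) (v : Cn N × ℝ) :
    HasFDerivAt (Pmon N β)
      (∑ x, (∏ y ∈ Finset.univ.erase x, (lcoord N y v) ^ β y) •
        (((β x : ℝ) * (lcoord N x v) ^ (β x - 1)) • (lcoord N x))) v :=
  HasFDerivAt.finset_prod fun x _ =>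
    (hasDerivAt_pow (β x) (lcoord N x v)).comp_hasFDerivAt v (lcoord N x).hasFDerivAt

lemma fderiv_Pmon_apply (β : (Fin N × Bool) ⊕ Unit → ℕ) (v : Cn N × ℝ)
    (a : (Fin N × Bool) ⊕ Unit) :
    fderiv ℝ (Pmon N β) v (ebasis N a)
      = (β a : ℝ) * Pmon N (Function.update β a (β a - 1)) v := by
  rw [(hasFDerivAt_Pmon β v).fderiv]
  have hP : Pmon N (Function.update β a (β a - 1)) v
      = (lcoord N a v) ^ (β a - 1) * ∏ y ∈ Finset.univ.erase a, (lcoord N y v) ^ β y := by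
    rw [Pmon, ← Finset.mul_prod_erase Finset.univ _ (Finset.mem_univ a)]
    congr 1
    · simp
    · exact Finset.prod_congr rfl fun x hx =>
        by rw [Function.update_of_ne (Finset.mem_erase.1 hx).1]
  simp only [ContinuousLinearMap.coe_sum', Finset.sum_apply, ContinuousLinearMap.coe_smul',
    Pi.smul_apply, smul_eq_mul, lcoord_ebasis]
  rw [Finset.sum_eq_single a]
  · rw [if_pos rfl, hP]; ring
  · intro x _ hx
    rw [if_neg hx]; ring
  · intro h; exact absurd (Finset.mem_univ a) h

lemma iteratedFDeriv_Pmon (L : List ((Fin N × Bool) ⊕ Unit)) (β : (Fin N × Bool) ⊕ Unit → ℕ)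
    (v : Cn N × ℝ) :
    iteratedFDeriv ℝ L.length (Pmon N β) v (fun j => ebasis N (L.get j)) =
      ((∏ x, (β x).descFactorial (L.count x) : ℕ) : ℝ) *
        Pmon N (fun x => β x - L.count x) v := by
  induction L generalizing β v with
  | nil => simp [Pmon]
  | cons a L IH =>
    have hdiff : Differentiable ℝ (iteratedFDeriv ℝ L.length (Pmon N β)) :=
      (contDiff_Pmon β (n := ⊤)).differentiable_iteratedFDeriv
        (by exact_mod_cast WithTop.coe_lt_top L.length)
    have hkey : iteratedFDeriv ℝ (a :: L).length (Pmon N β) v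
          (fun j => ebasis N ((a :: L).get j))
        = fderiv ℝ (fun y => iteratedFDeriv ℝ L.length (Pmon N β) y
            (fun j => ebasis N (L.get j))) v (ebasis N a) := by
      set A := ContinuousMultilinearMap.apply ℝ (fun _ : Fin L.length => Cn N × ℝ) ℝ
        (fun j => ebasis N (L.get j)) with hA
      have h4 : fderiv ℝ (fun y => iteratedFDeriv ℝ L.length (Pmon N β) y
            (fun j => ebasis N (L.get j))) v
          = A.comp (fderiv ℝ (iteratedFDeriv ℝ L.length (Pmon N β)) v) :=
        (A.hasFDerivAt.comp v (hdiff v).hasFDerivAt).fderiv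
      rw [h4]
      rfl
    rw [hkey]
    have h3 : (fun y => iteratedFDeriv ℝ L.length (Pmon N β) y
          (fun j => ebasis N (L.get j)))
        = fun y => ((∏ x, (β x).descFactorial (L.count x) : ℕ) : ℝ) *
            Pmon N (fun x => β x - L.count x) y := funext fun y => IH β y
    rw [h3, fderiv_const_mul (((contDiff_Pmon _ (n := 1)).differentiable (by simp)) v), ContinuousLinearMap.smul_apply,
      smul_eq_mul, fderiv_Pmon_apply]
    have hupdate : Function.update (fun x => β x - L.count x) a ((β a - L.count a) - 1)
        = fun x => β x - (a :: L).count x := by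
      funext x
      rcases eq_or_ne x a with rfl | hx
      · simp [List.count_cons_self, Nat.sub_sub]
      · rw [Function.update_of_ne hx, List.count_cons]
        simp [beq_iff_eq, hx, Ne.symm hx]
    have hprod : (∏ x, (β x).descFactorial ((a :: L).count x))
        = (β a - L.count a) * ∏ x, (β x).descFactorial (L.count x) := by
      rw [← Finset.mul_prod_erase Finset.univ
          (fun x => (β x).descFactorial ((a :: L).count x)) (Finset.mem_univ a),
        ← Finset.mul_prod_erase Finset.univ
          (fun x => (β x).descFactorial (L.count x)) (Finset.mem_univ a), ← mul_assoc]
      congr 1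
      · rw [List.count_cons_self, Nat.descFactorial_succ]
      · refine Finset.prod_congr rfl fun x hx => ?_
        rw [List.count_cons]
        simp [beq_iff_eq, (Finset.mem_erase.1 hx).1,
          Ne.symm (Finset.mem_erase.1 hx).1]
    rw [hupdate, hprod]
    push_cast
    ring

lemma lcoord_zero (x : (Fin N × Bool) ⊕ Unit) : lcoord N x (0 : Cn N × ℝ) = 0 := map_zero _

lemma Pmon_zero_of_forall (β : (Fin N × Bool) ⊕ Unit → ℕ) (h : ∀ x, β x = 0) :
    Pmon N β 0 = 1 := by
  rw [Pmon]
  exact Finset.prod_eq_one fun x _ => by rw [h x, pow_zero]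

lemma Pmon_zero_of_ne (β : (Fin N × Bool) ⊕ Unit → ℕ) {x : (Fin N × Bool) ⊕ Unit}
    (h : β x ≠ 0) : Pmon N β 0 = 0 :=
  Finset.prod_eq_zero (Finset.mem_univ x) (by rw [lcoord_zero, zero_pow h])

lemma sum_map_ite {α : Type*} [BEq α] [LawfulBEq α] (B : List α) (y : α) (g : α → ℕ) :
    (B.map fun x => if x == y then g x else 0).sum = g y * B.count y := by
  induction B with
  | nil => simp
  | cons a B IH =>
    rcases eq_or_ne a y with rfl | h
    · simp [IH, List.count_cons]
      ring
    · simp [IH, List.count_cons, h, beq_iff_eq]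

lemma count_emultiList (β : (Fin N × Bool) ⊕ Unit → ℕ) (y : (Fin N × Bool) ⊕ Unit) :
    (emultiList N β).count y = β y := by
  have hbase : (((List.finRange N).flatMap fun i =>
        [Sum.inl (i, false), Sum.inl (i, true)]) ++
        [Sum.inr ()] : List ((Fin N × Bool) ⊕ Unit)).count y = 1 := by
    rw [List.count_append]
    rcases y with ⟨i, b⟩ | u
    · have h0 : (([Sum.inr ()] : List ((Fin N × Bool) ⊕ Unit)).count (Sum.inl (i, b))) = 0 := by
        simp [List.count_cons, beq_iff_eq]
      rw [h0, List.count_flatMap]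
      have hmap : (List.map ((fun l => List.count (Sum.inl (i, b)) l) ∘ fun i' =>
            ([Sum.inl (i', false), Sum.inl (i', true)] :
              List ((Fin N × Bool) ⊕ Unit))) (List.finRange N))
          = List.map (fun i' => if i' == i then (fun _ => 1) i' else 0) (List.finRange N) := by
        refine List.map_congr_left fun i' _ => ?_
        rcases eq_or_ne i' i with rfl | h
        · cases b <;> simp [List.count_cons, beq_iff_eq]
        · cases b <;>
            simp [List.count_cons, beq_iff_eq, h, Ne.symm h, Prod.ext_iff]
      rw [hmap, sum_map_ite (List.finRange N) i (fun _ => 1),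
        List.count_eq_one_of_mem (List.nodup_finRange N) (List.mem_finRange i)]
    · obtain ⟨⟩ := u
      have h0 : ((List.finRange N).flatMap fun i =>
          ([Sum.inl (i, false), Sum.inl (i, true)] :
            List ((Fin N × Bool) ⊕ Unit))).count (Sum.inr ()) = 0 := by
        rw [List.count_eq_zero]
        simp
      rw [h0]
      simp [List.count_cons]
  rw [emultiList, List.count_flatMap]
  have hmap : (List.map ((fun l => List.count y l) ∘ fun x => List.replicate (β x) x)
        ((((List.finRange N).flatMap fun i => [Sum.inl (i, false), Sum.inl (i, true)]) ++
          [Sum.inr ()])))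
      = List.map (fun x => if x == y then β x else 0)
        ((((List.finRange N).flatMap fun i => [Sum.inl (i, false), Sum.inl (i, true)]) ++
          [Sum.inr ()])) := by
    refine List.map_congr_left fun x _ => ?_
    simp only [Function.comp_apply, List.count_replicate]
  rw [hmap, sum_map_ite _ y β, hbase, mul_one]

end Aux

section Sigma

open Finset

variable {N N' d k : ℕ}

/-- Embedding of the real coordinates of `ℂ^N × ℝ` into those of `ℂ^{N'+1}`. -/
def φm (N N' : ℕ) (h : N ≤ N') : (Fin N × Bool) ⊕ Unit → Fin (N' + 1) × Bool := fun x =>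
  match x with
  | Sum.inl y => (⟨(y.1 : ℕ), by have := y.1.isLt; omega⟩, y.2)
  | Sum.inr _ => (⟨N', by omega⟩, false)

lemma φm_inj (h : N ≤ N') : Function.Injective (φm N N' h) := by
  intro x y hxy
  rcases x with ⟨j, b⟩ | u <;> rcases y with ⟨j', b'⟩ | u'
  · simp only [φm, Prod.mk.injEq, Fin.mk.injEq] at hxy
    exact congrArg Sum.inl (Prod.ext (Fin.ext hxy.1) hxy.2)
  · exfalso
    simp only [φm, Prod.mk.injEq, Fin.mk.injEq] at hxy
    have := j.isLt
    omega
  · exfalso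
    simp only [φm, Prod.mk.injEq, Fin.mk.injEq] at hxy
    have := j'.isLt
    omega
  · exact congrArg Sum.inr (Subsingleton.elim u u')

lemma coordR_σ (h : N ≤ N') (x : (Fin N × Bool) ⊕ Unit) (Zu : Cn N × ℝ) :
    coordR (σmap N N' Zu) (φm N N' h x) = lcoord N x Zu := by
  rcases x with ⟨j, b⟩ | u
  · simp only [coordR, φm, σmap, WithLp.equiv_symm_apply, WithLp.ofLp_toLp]
    rw [dif_pos j.isLt]
    cases b <;> simp
  · simp only [coordR, φm, σmap, WithLp.equiv_symm_apply, WithLp.ofLp_toLp]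
    rw [dif_neg (by omega)]
    simp [Complex.add_re, Complex.ofReal_re, Complex.mul_re, Complex.I_re, Complex.I_im,
      Complex.im_sum, Complex.ofReal_im]

/-- Extension of a multi-index on the real coordinates of `ℂ^N × ℝ` by zero. -/
def extFn (h : N ≤ N') (k : ℕ) (β : (Fin N × Bool) ⊕ Unit → Fin (k + 1)) :
    Fin (N' + 1) × Bool → Fin (k + 1) :=
  Function.extend (φm N N' h) β 0

lemma extFn_sum (h : N ≤ N') (β : (Fin N × Bool) ⊕ Unit → Fin (k + 1)) :
    ∑ x, ((extFn h k β x : ℕ)) = ∑ y, ((β y : ℕ)) := by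
  classical
  have h1 : ∑ x : Fin (N' + 1) × Bool, ((extFn h k β x : ℕ))
      = ∑ x ∈ Finset.univ.image (φm N N' h), ((extFn h k β x : ℕ)) := by
    refine (Finset.sum_subset (Finset.subset_univ _) fun x _ hx => ?_).symm
    have hnr : ¬∃ y, φm N N' h y = x := by
      intro ⟨y, hy⟩
      exact hx (Finset.mem_image.2 ⟨y, Finset.mem_univ y, hy⟩)
    rw [extFn, Function.extend_apply' _ _ _ hnr]
    simp
  rw [h1, Finset.sum_image (fun y _ y' _ e => φm_inj h e)]
  refine Finset.sum_congr rfl fun y _ => ?_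
  rw [extFn, Function.Injective.extend_apply (φm_inj h)]

/-- Extension of a multi-index of `EIdx` to one of `MIdx`. -/
def extIdx (h : N ≤ N') (k : ℕ) : EIdx N k → MIdx (N' + 1) k := fun β =>
  ⟨extFn h k β.1, by rw [extFn_sum h β.1]; exact β.2⟩

lemma prod_coordR_σ (h : N ≤ N') (β : (Fin N × Bool) ⊕ Unit → Fin (k + 1)) (Zu : Cn N × ℝ) :
    ∏ x : Fin (N' + 1) × Bool, (coordR (σmap N N' Zu) x) ^ ((extFn h k β x : ℕ))
      = Pmon N (fun y => (β y : ℕ)) Zu := by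
  classical
  rw [Pmon]
  have h1 : ∏ x : Fin (N' + 1) × Bool, (coordR (σmap N N' Zu) x) ^ ((extFn h k β x : ℕ))
      = ∏ x ∈ Finset.univ.image (φm N N' h),
          (coordR (σmap N N' Zu) x) ^ ((extFn h k β x : ℕ)) := by
    refine (Finset.prod_subset (Finset.subset_univ _) fun x _ hx => ?_).symm
    have hnr : ¬∃ y, φm N N' h y = x := by
      intro ⟨y, hy⟩
      exact hx (Finset.mem_image.2 ⟨y, Finset.mem_univ y, hy⟩)
    rw [extFn, Function.extend_apply' _ _ _ hnr]
    simp
  rw [h1, Finset.prod_image (fun y _ y' _ e => φm_inj h e)]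
  refine Finset.prod_congr rfl fun y _ => ?_
  rw [coordR_σ h, extFn, Function.Injective.extend_apply (φm_inj h)]

lemma contDiff_re_coord (i : Fin N) {n : ℕ∞} :
    ContDiff ℝ n fun Zu : Cn N × ℝ => (Zu.1 i).re := by
  have h : (fun Zu : Cn N × ℝ => (Zu.1 i).re)
      = fun Zu => lcoord N (Sum.inl (i, false)) Zu := by
    funext Zu; simp
  rw [h]
  exact (lcoord N _).contDiff

lemma contDiff_im_coord (i : Fin N) {n : ℕ∞} :
    ContDiff ℝ n fun Zu : Cn N × ℝ => (Zu.1 i).im := by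
  have h : (fun Zu : Cn N × ℝ => (Zu.1 i).im)
      = fun Zu => lcoord N (Sum.inl (i, true)) Zu := by
    funext Zu; simp
  rw [h]
  exact (lcoord N _).contDiff

lemma contDiff_coordσ {n : ℕ∞} (x : Fin (N' + 1) × Bool) :
    ContDiff ℝ n fun Zu : Cn N × ℝ => coordR (σmap N N' Zu) x := by
  obtain ⟨j, b⟩ := x
  by_cases hj : (j : ℕ) < N
  · have he : (fun Zu : Cn N × ℝ => coordR (σmap N N' Zu) (j, b))
        = fun Zu => lcoord N (Sum.inl (⟨(j : ℕ), hj⟩, b)) Zu := by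
      funext Zu
      simp only [coordR, σmap, WithLp.equiv_symm_apply, WithLp.ofLp_toLp]
      rw [dif_pos hj, lcoord_inl]
    rw [he]
    exact (lcoord N _).contDiff
  · by_cases hN' : (j : ℕ) = N'
    · cases b
      · have he : (fun Zu : Cn N × ℝ => coordR (σmap N N' Zu) (j, false))
            = fun Zu : Cn N × ℝ => Zu.2 := by
          funext Zu
          simp only [coordR, σmap, WithLp.equiv_symm_apply, WithLp.ofLp_toLp]
          rw [dif_neg hj, if_pos hN']
          simp [Complex.add_re, Complex.mul_re, Complex.im_sum]
        rw [he]
        exact (ContinuousLinearMap.snd ℝ (Cn N) ℝ).contDiff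
      · have he : (fun Zu : Cn N × ℝ => coordR (σmap N N' Zu) (j, true))
            = fun Zu : Cn N × ℝ =>
                ∑ i : Fin N, ((Zu.1 i).re * (Zu.1 i).re + (Zu.1 i).im * (Zu.1 i).im) := by
          funext Zu
          simp only [coordR, σmap, WithLp.equiv_symm_apply, WithLp.ofLp_toLp]
          rw [dif_neg hj, if_pos hN']
          simp [Complex.add_im, Complex.mul_im, Complex.re_sum, Complex.normSq_apply]
        rw [he]
        exact ContDiff.sum fun i _ =>
          ((contDiff_re_coord i).mul (contDiff_re_coord i)).add
            ((contDiff_im_coord i).mul (contDiff_im_coord i))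
    · have he : (fun Zu : Cn N × ℝ => coordR (σmap N N' Zu) (j, b))
          = fun _ => (0 : ℝ) := by
        funext Zu
        simp only [coordR, σmap, WithLp.equiv_symm_apply, WithLp.ofLp_toLp]
        rw [dif_neg hj, if_neg hN']
        cases b <;> simp
      rw [he]
      exact contDiff_const

lemma contDiff_eval {n : ℕ∞} (c : MIdx (N' + 1) k → Fin d → ℝ) (i : Fin d) :
    ContDiff ℝ n fun Zu : Cn N × ℝ => evalMPoly c (σmap N N' Zu) i := by
  simp only [evalMPoly]
  exact ContDiff.sum fun α _ =>
    contDiff_const.mul (contDiff_prod fun x _ => (contDiff_coordσ x).pow _)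

end Sigma

/-- **Key step of Lemma 5.1.** For `N' ≥ N` and `d ≥ 1`, the real-linear map
`T(q) = T_k(q ∘ σ)` from polynomial maps `ℂ^{N'+1} → ℝ^d` of degree at most `k` vanishing at
`0` to polynomial maps `ℝ^{2N+1} → ℝ^d` of degree at most `k` vanishing at `0` is
surjective. -/
theorem taylor_restriction_to_quadric_surjective
    {N N' d k : ℕ} (hd : 1 ≤ d) (hNN' : N ≤ N') :
    IsLinearMap ℝ (Tmap N N' d k) ∧ Function.Surjective (Tmap N N' d k) := by
  classical
  constructor
  · constructor
    · intro c c'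
      funext γ i
      have hadd : (fun Zu => evalMPoly (c + c') (σmap N N' Zu) i)
          = (fun Zu => evalMPoly c (σmap N N' Zu) i)
            + (fun Zu => evalMPoly c' (σmap N N' Zu) i) := by
        funext Zu
        simp [evalMPoly, add_mul, Finset.sum_add_distrib]
      simp only [Tmap, Pi.add_apply, emderiv]
      rw [hadd, iteratedFDeriv_add_apply (contDiff_eval c i).contDiffAt (contDiff_eval c' i).contDiffAt,
        ContinuousMultilinearMap.add_apply, add_div]
    · intro a c
      funext γ i
      have hsmul : (fun Zu => evalMPoly (a • c) (σmap N N' Zu) i)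
          = a • fun Zu => evalMPoly c (σmap N N' Zu) i := by
        funext Zu
        simp [evalMPoly, Finset.mul_sum, smul_eq_mul, mul_assoc]
      simp only [Tmap, Pi.smul_apply, smul_eq_mul, emderiv]
      rw [hsmul, iteratedFDeriv_const_smul_apply (contDiff_eval c i).contDiffAt,
        ContinuousMultilinearMap.smul_apply, smul_eq_mul, mul_div_assoc]
  · intro e
    refine ⟨fun α i => ∑ β : EIdx N k, if α = extIdx hNN' k β then e β i else 0, ?_⟩
    funext γ i
    have hfun : (fun Zu => evalMPoly
          (fun α i => ∑ β : EIdx N k, if α = extIdx hNN' k β then e β i else 0)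
          (σmap N N' Zu) i)
        = fun Zu => ∑ β : EIdx N k, e β i * Pmon N (fun y => (β.1 y : ℕ)) Zu := by
      funext Zu
      simp only [evalMPoly, Finset.sum_mul, ite_mul, zero_mul]
      rw [Finset.sum_comm]
      refine Finset.sum_congr rfl fun β _ => ?_
      rw [Finset.sum_ite_eq' Finset.univ (extIdx hNN' k β)
        (fun α => e β i * ∏ x : Fin (N' + 1) × Bool, coordR (σmap N N' Zu) x ^ ((α.1 x : ℕ))),
        if_pos (Finset.mem_univ _)]
      congr 1
      exact prod_coordR_σ hNN' β.1 Zu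
    simp only [Tmap, emderiv]
    rw [hfun]
    rw [iteratedFDeriv_sum (fun β _ => contDiff_const.mul (contDiff_Pmon _))]
    simp only [Finset.sum_apply, ContinuousMultilinearMap.sum_apply]
    have hterm : ∀ β : EIdx N k,
        iteratedFDeriv ℝ (emultiList N fun y => (γ.1 y : ℕ)).length
          (fun Zu => e β i * Pmon N (fun y => (β.1 y : ℕ)) Zu) 0
          (fun j => ebasis N ((emultiList N fun y => (γ.1 y : ℕ)).get j))
        = e β i * (if β = γ then ∏ y, (((γ.1 y : ℕ).factorial : ℝ)) else 0) := by
      intro β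
      rw [show (fun Zu => e β i * Pmon N (fun y => (β.1 y : ℕ)) Zu)
          = e β i • Pmon N (fun y => (β.1 y : ℕ)) from rfl,
        iteratedFDeriv_const_smul_apply (contDiff_Pmon _).contDiffAt,
        ContinuousMultilinearMap.smul_apply, smul_eq_mul]
      congr 1
      rw [iteratedFDeriv_Pmon]
      rcases eq_or_ne β γ with rfl | hne
      · rw [if_pos rfl]
        have h1 : (∏ x, ((β.1 x : ℕ)).descFactorial
              ((emultiList N fun y => (β.1 y : ℕ)).count x))
            = ∏ x, ((β.1 x : ℕ)).factorial := by
          refine Finset.prod_congr rfl fun x _ => ?_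
          rw [count_emultiList, Nat.descFactorial_self]
        rw [h1, Pmon_zero_of_forall _ (fun x => by rw [count_emultiList, Nat.sub_self]),
          mul_one, Nat.cast_prod]
      · rw [if_neg hne]
        have hx : ∃ x, (β.1 x : ℕ) ≠ (γ.1 x : ℕ) := by
          by_contra hcon
          push_neg at hcon
          exact hne (Subtype.ext (funext fun x => Fin.ext (hcon x)))
        obtain ⟨x, hx⟩ := hx
        rcases lt_or_gt_of_ne hx with hlt | hgt
        · have h0 : ((β.1 x : ℕ)).descFactorial
              ((emultiList N fun y => (γ.1 y : ℕ)).count x) = 0 := by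
            rw [count_emultiList]
            exact Nat.descFactorial_eq_zero_iff_lt.2 hlt
          rw [Finset.prod_eq_zero (Finset.mem_univ x) h0]
          simp
        · have h0 : (β.1 x : ℕ) - (emultiList N fun y => (γ.1 y : ℕ)).count x ≠ 0 := by
            rw [count_emultiList]
            omega
          rw [Pmon_zero_of_ne _ h0, mul_zero]
    rw [Finset.sum_congr rfl fun β _ => hterm β]
    simp only [mul_ite, mul_zero, Finset.sum_ite_eq' Finset.univ γ, Finset.mem_univ, if_pos]
    have hD : (∏ y, (((γ.1 y : ℕ).factorial : ℝ))) ≠ 0 :=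
      Finset.prod_ne_zero_iff.2 fun y _ => Nat.cast_ne_zero.2 (Nat.factorial_ne_zero _)
    rw [mul_div_cancel_right₀ _ hD]


end
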